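/- arXiv:1005.0822 — 3 statements merged into one kernel-verified Lean document; each statement's English description precedes it below -/
import Mathlib

section
/- Let τ be a positive trace on a unital ℂ-algebra A with involution. Then for all r, n ∈ ℕ and all a₁,…,aₙ ∈ A, |τ((a₁ + ⋯ + aₙ)^r)| ≤ (Σ_{i=1}^n τ((aᵢ*aᵢ)^{φ(r)})^{1/(2φ(r))})^r, where φ(r) = 2^{r/2−1} for even r and φ(r) = φ(r+1) = 2^{(r+1)/2−1} for odd r. -/
open scoped ComplexOrder

noncomputable section

/-- A positive trace on a unital complex `*`-algebra: a `ℂ`-linear functional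
with `τ(1) = 1`, `τ(a*a) ≥ 0` (a nonnegative real) and `τ(ab) = τ(ba)`. -/
def IsTrace {A : Type*} [Ring A] [Algebra ℂ A] [StarRing A] [StarModule ℂ A]
    (τ : A →ₗ[ℂ] ℂ) : Prop :=
  τ 1 = 1 ∧ (∀ a, 0 ≤ τ (star a * a)) ∧ (∀ a b, τ (a * b) = τ (b * a))

/-- `φ(n) = 2^{n/2-1}` for even `n`, and `φ(n) = φ(n+1) = 2^{(n+1)/2-1}` for odd `n`. -/
def phi (m : ℕ) : ℕ := if Even m then 2 ^ (m / 2 - 1) else 2 ^ ((m + 1) / 2 - 1)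

/-!
Expanding `(a₁ + ⋯ + aₙ) ^ r` into words, it suffices to prove the Hölder-type bound
`|τ(c₁ ⋯ c_r)| ^ (2φ) ≤ ∏ τ((cⱼ⋆ cⱼ) ^ φ)` for each word, where `φ = 2 ^ k` and `r ≤ 2 (k + 1)`.
Cutting the word into two halves `p₁ p₂` of length at most `k + 1`, Cauchy–Schwarz for the
positive form `τ(x⋆ y)` bounds `|τ(p₁ p₂)|²` by `τ(p₁ p₁⋆) τ(p₂ p₂⋆)`. Writing
`p p⋆ = c (q q⋆) c⋆` and using cyclicity, each of these is peeled off one letter at a time by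
`|τ((PQ) ^ 2ᵐ)|² ≤ τ(P ^ 2ᵐ⁺¹) τ(Q ^ 2ᵐ⁺¹)` for self-adjoint `P, Q`, which follows from
Cauchy–Schwarz once the powers in `(PQ) ^ 2ᵐ` are sorted into `P ^ 2ᵐ Q ^ 2ᵐ`. That sorting
(a Lieb–Thirring inequality for dyadic exponents) is proved by strong induction on `m`: squaring
and repeated Cauchy–Schwarz move `τ((PQ) ^ 2ᵐ⁺¹)` to `τ((Q² P²) ^ 2ᵐ)`.
-/

open ComplexConjugate

theorem exists_pow_star_mul_self_eq_star_mul_self {M : Type*} [Monoid M] [StarMul M]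
    (w : M) (n : ℕ) : ∃ z : M, (star w * w) ^ n = star z * z := by
  have hsa : star ((star w * w) ^ (n / 2)) = (star w * w) ^ (n / 2) := by
    rw [star_pow, star_mul, star_star]
  rcases Nat.even_or_odd' n with ⟨k, rfl | rfl⟩
  · refine ⟨(star w * w) ^ k, ?_⟩
    rw [Nat.mul_div_cancel_left k two_pos] at hsa
    rw [hsa, ← pow_add, two_mul]
  · refine ⟨w * (star w * w) ^ k, ?_⟩
    rw [show (2 * k + 1) / 2 = k by omega] at hsa
    rw [star_mul, hsa, mul_assoc, ← mul_assoc (star w), ← pow_succ', ← pow_add]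
    ring_nf

theorem sum_pow_eq_sum_list_prod {R : Type*} [Semiring R] {ι : Type*} [Fintype ι]
    (a : ι → R) (r : ℕ) :
    (∑ i, a i) ^ r = ∑ f : Fin r → ι, (List.ofFn fun j => a (f j)).prod := by
  rw [← MultilinearMap.mkPiAlgebraFin_apply_const (R := ℕ), MultilinearMap.map_sum]
  rfl

section

variable {A : Type*} [Ring A] [Algebra ℂ A] [StarRing A] [StarModule ℂ A] {τ : A →ₗ[ℂ] ℂ}

theorem IsTrace.re_map_star_mul_self_nonneg (hτ : IsTrace τ) (x : A) :
    0 ≤ (τ (star x * x)).re :=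
  (Complex.nonneg_iff.1 (hτ.2.1 x)).1

theorem IsTrace.im_map_eq_zero_of_isSelfAdjoint (hτ : IsTrace τ) {h : A}
    (hh : IsSelfAdjoint h) : (τ h).im = 0 := by
  have hsq : (4 : ℂ) • h = star (h + 1) * (h + 1) - star (h - 1) * (h - 1) := by
    rw [star_add, star_sub, star_one, hh.star_eq]
    simp only [ofNat_smul_eq_nsmul]
    noncomm_ring
  have him := congrArg (fun z => (τ z).im) hsq
  simp only [map_smul, map_sub, smul_eq_mul, Complex.sub_im,
    (Complex.nonneg_iff.1 (hτ.2.1 _)).2.symm] at him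
  simpa using him

theorem IsTrace.map_star (hτ : IsTrace τ) (a : A) : τ (star a) = conj (τ a) := by
  have hsum := hτ.im_map_eq_zero_of_isSelfAdjoint (IsSelfAdjoint.add_star_self a)
  have hdiff : IsSelfAdjoint (Complex.I • (a - star a)) := by
    rw [IsSelfAdjoint, star_smul, star_sub, star_star, Complex.star_def, Complex.conj_I,
      neg_smul, ← smul_neg, neg_sub]
  have hdiff' := hτ.im_map_eq_zero_of_isSelfAdjoint hdiff
  simp only [map_add, map_smul, map_sub, smul_eq_mul, Complex.add_im, Complex.mul_im,
    Complex.I_re, Complex.I_im, Complex.sub_re, Complex.sub_im] at hsum hdiff'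
  apply Complex.ext <;> simp only [Complex.conj_re, Complex.conj_im] <;> linarith

abbrev IsTrace.preInnerProductCore (hτ : IsTrace τ) : PreInnerProductSpace.Core ℂ A where
  inner x y := τ (star x * y)
  conj_inner_symm x y := by rw [← hτ.map_star, star_mul, star_star]
  re_inner_nonneg := hτ.re_map_star_mul_self_nonneg
  add_left x y z := by rw [star_add, add_mul, map_add]
  smul_left x y r := by rw [star_smul, smul_mul_assoc, map_smul, smul_eq_mul]; rfl

theorem IsTrace.norm_map_mul_sq_le (hτ : IsTrace τ) (x y : A) :
    ‖τ (x * y)‖ ^ 2 ≤ (τ (x * star x)).re * (τ (star y * y)).re := by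
  have h := InnerProductSpace.Core.inner_mul_inner_self_le (c := hτ.preInnerProductCore)
    (star x) y
  change ‖τ (star (star x) * y)‖ * ‖τ (star y * star x)‖ ≤
    (τ (star (star x) * star x)).re * (τ (star y * y)).re at h
  rwa [star_star, ← star_star (star y * star x), hτ.map_star, star_mul, star_star, star_star,
    Complex.norm_conj, ← sq] at h

theorem IsTrace.map_mul_pow_comm (hτ : IsTrace τ) (a b : A) (n : ℕ) :
    τ ((a * b) ^ n) = τ ((b * a) ^ n) := by
  cases n with
  | zero => simp
  | succ n =>
    rw [pow_succ, ← mul_assoc, mul_pow_mul, mul_assoc, hτ.2.2, mul_assoc, ← pow_succ]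

theorem IsTrace.re_map_pow_star_mul_self_nonneg (hτ : IsTrace τ) (w : A) (n : ℕ) :
    0 ≤ (τ ((star w * w) ^ n)).re := by
  obtain ⟨z, hz⟩ := exists_pow_star_mul_self_eq_star_mul_self w n
  rw [hz]
  exact hτ.re_map_star_mul_self_nonneg z

theorem IsTrace.re_map_pow_mul_star_nonneg (hτ : IsTrace τ) (w : A) (n : ℕ) :
    0 ≤ (τ ((w * star w) ^ n)).re := by
  simpa using hτ.re_map_pow_star_mul_self_nonneg (star w) n

theorem IsTrace.norm_map_mul_self_le (hτ : IsTrace τ) (x : A) :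
    ‖τ (x * x)‖ ≤ (τ (x * star x)).re := by
  have h := hτ.norm_map_mul_sq_le x x
  rw [hτ.2.2 (star x), ← sq (τ (x * star x)).re] at h
  exact (sq_le_sq₀ (norm_nonneg _) (by simpa using hτ.re_map_pow_mul_star_nonneg x 1)).1 h

theorem IsTrace.sq_re_map_pow_le (hτ : IsTrace τ) {h : A} (hh : IsSelfAdjoint h) (k : ℕ) :
    (τ (h ^ k)).re ^ 2 ≤ (τ (h ^ (2 * k))).re := by
  have h1 := hτ.norm_map_mul_sq_le 1 (h ^ k)
  rw [one_mul, star_one, one_mul, hτ.1, Complex.one_re, one_mul, (hh.pow k).star_eq,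
    ← pow_add, ← two_mul] at h1
  calc (τ (h ^ k)).re ^ 2 ≤ ‖τ (h ^ k)‖ ^ 2 := by
        rw [← sq_abs]; gcongr; exact Complex.abs_re_le_norm _
    _ ≤ _ := h1

theorem IsTrace.re_map_pow_pow_two_pow_le (hτ : IsTrace τ) {h : A} (hh : IsSelfAdjoint h)
    (k d : ℕ) : (τ (h ^ k)).re ^ 2 ^ d ≤ (τ (h ^ (k * 2 ^ d))).re := by
  induction d generalizing k with
  | zero => simp
  | succ d ih =>
    calc (τ (h ^ k)).re ^ 2 ^ (d + 1) = ((τ (h ^ k)).re ^ 2) ^ 2 ^ d := by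
          rw [← pow_mul, pow_succ']
      _ ≤ (τ (h ^ (2 * k))).re ^ 2 ^ d :=
          pow_le_pow_left₀ (sq_nonneg _) (hτ.sq_re_map_pow_le hh k) _
      _ ≤ (τ (h ^ (k * 2 ^ (d + 1)))).re := by
          convert ih (2 * k) using 4; ring

def LiebThirringAt (τ : A →ₗ[ℂ] ℂ) (m : ℕ) : Prop :=
  ∀ P Q : A, IsSelfAdjoint P → IsSelfAdjoint Q →
    ‖τ ((P * Q) ^ 2 ^ m)‖ ≤ ‖τ (P ^ 2 ^ m * Q ^ 2 ^ m)‖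

theorem IsTrace.norm_map_mul_pow_sq_le_of_liebThirringAt (hτ : IsTrace τ) {m : ℕ}
    (hm : LiebThirringAt τ m) {P Q : A} (hP : IsSelfAdjoint P) (hQ : IsSelfAdjoint Q) :
    ‖τ ((P * Q) ^ 2 ^ m)‖ ^ 2 ≤ (τ (P ^ 2 ^ (m + 1))).re * (τ (Q ^ 2 ^ (m + 1))).re := by
  calc ‖τ ((P * Q) ^ 2 ^ m)‖ ^ 2 ≤ ‖τ (P ^ 2 ^ m * Q ^ 2 ^ m)‖ ^ 2 :=
        pow_le_pow_left₀ (norm_nonneg _) (hm P Q hP hQ) 2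
    _ ≤ _ := hτ.norm_map_mul_sq_le _ _
    _ = _ := by
        rw [(hP.pow _).star_eq, (hQ.pow _).star_eq, ← pow_add, ← pow_add, ← two_mul,
          ← pow_succ']

theorem IsTrace.re_map_sq_mul_star_sq_pow_le_of_liebThirringAt (hτ : IsTrace τ) {m : ℕ}
    (hm : LiebThirringAt τ m) (Y : A) :
    (τ ((Y ^ 2 * star (Y ^ 2)) ^ 2 ^ m)).re ≤ (τ ((Y * star Y) ^ 2 ^ (m + 1))).re := by
  set v := Y * star Y
  set u := star Y * Y
  have hYY : τ ((Y ^ 2 * star (Y ^ 2)) ^ 2 ^ m) = τ ((v * u) ^ 2 ^ m) := by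
    rw [show Y ^ 2 * star (Y ^ 2) = Y * (Y * star Y * star Y) by rw [star_pow]; noncomm_ring,
      hτ.map_mul_pow_comm]
    simp only [v, u, mul_assoc]
  have hu : τ (u ^ 2 ^ (m + 1)) = τ (v ^ 2 ^ (m + 1)) := hτ.map_mul_pow_comm _ _ _
  have hsq := hτ.norm_map_mul_pow_sq_le_of_liebThirringAt hm (IsSelfAdjoint.mul_star_self Y)
    (IsSelfAdjoint.star_mul_self Y)
  rw [hu, ← sq] at hsq
  rw [hYY]
  exact (Complex.re_le_norm _).trans
    ((sq_le_sq₀ (norm_nonneg _) (hτ.re_map_pow_mul_star_nonneg Y _)).1 hsq)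

theorem IsTrace.re_map_pow_mul_star_le_of_liebThirringAt (hτ : IsTrace τ) {j : ℕ}
    (hj : ∀ i < j, LiebThirringAt τ i) (Y : A) :
    (τ (Y ^ 2 ^ j * star (Y ^ 2 ^ j))).re ≤ (τ ((Y * star Y) ^ 2 ^ j)).re := by
  induction j generalizing Y with
  | zero => simp
  | succ j ih =>
    calc (τ (Y ^ 2 ^ (j + 1) * star (Y ^ 2 ^ (j + 1)))).re
        = (τ ((Y ^ 2) ^ 2 ^ j * star ((Y ^ 2) ^ 2 ^ j))).re := by
          rw [← pow_mul, ← pow_succ']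
      _ ≤ (τ ((Y ^ 2 * star (Y ^ 2)) ^ 2 ^ j)).re :=
          ih (fun i hi => hj i (Nat.lt_succ_of_lt hi)) _
      _ ≤ _ :=
          hτ.re_map_sq_mul_star_sq_pow_le_of_liebThirringAt (hj j (Nat.lt_succ_self j)) Y

theorem IsTrace.liebThirringAt (hτ : IsTrace τ) (m : ℕ) : LiebThirringAt τ m := by
  induction m using Nat.strong_induction_on with
  | _ m ih =>
  intro P Q hP hQ
  cases m with
  | zero => simp
  | succ M =>
    have hPQ : star (P * Q) = Q * P := by rw [star_mul, hP.star_eq, hQ.star_eq]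
    calc ‖τ ((P * Q) ^ 2 ^ (M + 1))‖
        = ‖τ ((P * Q) ^ 2 ^ M * (P * Q) ^ 2 ^ M)‖ := by rw [← pow_add, ← two_mul, pow_succ']
      _ ≤ (τ ((P * Q) ^ 2 ^ M * star ((P * Q) ^ 2 ^ M))).re := hτ.norm_map_mul_self_le _
      _ ≤ (τ ((P * Q * star (P * Q)) ^ 2 ^ M)).re :=
          hτ.re_map_pow_mul_star_le_of_liebThirringAt (fun i hi => ih i (by omega)) _
      _ = (τ ((Q ^ 2 * P ^ 2) ^ 2 ^ M)).re := by
          rw [hPQ, mul_assoc, hτ.map_mul_pow_comm, sq, sq]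
          simp only [mul_assoc]
      _ ≤ ‖τ ((Q ^ 2 * P ^ 2) ^ 2 ^ M)‖ := Complex.re_le_norm _
      _ ≤ ‖τ ((Q ^ 2) ^ 2 ^ M * (P ^ 2) ^ 2 ^ M)‖ :=
          ih M (Nat.lt_succ_self M) _ _ (hQ.pow 2) (hP.pow 2)
      _ = ‖τ (P ^ 2 ^ (M + 1) * Q ^ 2 ^ (M + 1))‖ := by
          rw [hτ.2.2, ← pow_mul, ← pow_mul, ← pow_succ']

theorem IsTrace.prod_map_re_map_pow_star_mul_self_nonneg (hτ : IsTrace τ) (l : List A)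
    (n : ℕ) : 0 ≤ (l.map fun c => (τ ((star c * c) ^ n)).re).prod :=
  List.prod_nonneg fun _ hx => by
    obtain ⟨c, -, rfl⟩ := List.mem_map.1 hx
    exact hτ.re_map_pow_star_mul_self_nonneg c n

theorem IsTrace.re_map_list_prod_mul_star_pow_le (hτ : IsTrace τ) (l : List A) (m k : ℕ)
    (hl : l.length ≤ k + 1) :
    (τ ((l.prod * star l.prod) ^ 2 ^ m)).re ^ 2 ^ k ≤
      (l.map fun c => (τ ((star c * c) ^ 2 ^ (m + k))).re).prod := by
  induction l generalizing m k with
  | nil => simp [hτ.1]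
  | cons c l ih =>
    cases k with
    | zero =>
      obtain rfl : l = [] := List.eq_nil_of_length_eq_zero (by simpa using hl)
      simp [hτ.map_mul_pow_comm c]
    | succ k =>
      set G := l.prod * star l.prod
      set P := star c * c
      have hword : τ (((c :: l).prod * star (c :: l).prod) ^ 2 ^ m) = τ ((G * P) ^ 2 ^ m) := by
        rw [List.prod_cons, star_mul, show c * l.prod * (star l.prod * star c) = c * (G * star c)
          by simp only [G, mul_assoc], hτ.map_mul_pow_comm, mul_assoc]
      have hsq : (τ (((c :: l).prod * star (c :: l).prod) ^ 2 ^ m)).re ^ 2 ≤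
          (τ (G ^ 2 ^ (m + 1))).re * (τ (P ^ 2 ^ (m + 1))).re := by
        rw [hword, ← sq_abs]
        exact (pow_le_pow_left₀ (abs_nonneg _) (Complex.abs_re_le_norm _) 2).trans
          (hτ.norm_map_mul_pow_sq_le_of_liebThirringAt (hτ.liebThirringAt m)
            (.mul_star_self _) (.star_mul_self c))
      have hP : (τ (P ^ 2 ^ (m + 1))).re ^ 2 ^ k ≤ (τ (P ^ 2 ^ (m + 1 + k))).re := by
        simpa only [← pow_add] using
          hτ.re_map_pow_pow_two_pow_le (.star_mul_self c) (2 ^ (m + 1)) k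
      calc _ = ((τ (((c :: l).prod * star (c :: l).prod) ^ 2 ^ m)).re ^ 2) ^ 2 ^ k := by
            rw [← pow_mul, pow_succ']
        _ ≤ ((τ (G ^ 2 ^ (m + 1))).re * (τ (P ^ 2 ^ (m + 1))).re) ^ 2 ^ k :=
            pow_le_pow_left₀ (sq_nonneg _) hsq _
        _ = (τ (G ^ 2 ^ (m + 1))).re ^ 2 ^ k * (τ (P ^ 2 ^ (m + 1))).re ^ 2 ^ k := mul_pow ..
        _ ≤ (l.map fun c => (τ ((star c * c) ^ 2 ^ (m + 1 + k))).re).prod *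
              (τ (P ^ 2 ^ (m + 1 + k))).re :=
            mul_le_mul (ih (m + 1) k (by simpa using hl)) hP
              (pow_nonneg (hτ.re_map_pow_star_mul_self_nonneg c _) _)
              (hτ.prod_map_re_map_pow_star_mul_self_nonneg l _)
        _ = _ := by rw [List.map_cons, List.prod_cons, mul_comm, add_right_comm, ← add_assoc]

theorem IsTrace.norm_map_list_prod_pow_le (hτ : IsTrace τ) (l : List A) (k : ℕ)
    (hl : l.length ≤ 2 * (k + 1)) :
    ‖τ l.prod‖ ^ (2 * 2 ^ k) ≤ (l.map fun c => (τ ((star c * c) ^ 2 ^ k)).re).prod := by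
  set l₁ := l.take (k + 1)
  set l₂ := l.drop (k + 1)
  have h₁ := hτ.re_map_list_prod_mul_star_pow_le l₁ 0 k (by simp [l₁])
  have h₂ := hτ.re_map_list_prod_mul_star_pow_le l₂ 0 k (by simp [l₂]; omega)
  simp only [pow_zero, pow_one, zero_add] at h₁ h₂
  have hsplit : l.prod = l₁.prod * l₂.prod := by rw [← List.prod_append, List.take_append_drop]
  have hcs := hτ.norm_map_mul_sq_le l₁.prod l₂.prod
  rw [hτ.2.2 (star _)] at hcs
  calc ‖τ l.prod‖ ^ (2 * 2 ^ k) = (‖τ (l₁.prod * l₂.prod)‖ ^ 2) ^ 2 ^ k := by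
        rw [hsplit, pow_mul]
    _ ≤ ((τ (l₁.prod * star l₁.prod)).re * (τ (l₂.prod * star l₂.prod)).re) ^ 2 ^ k :=
        pow_le_pow_left₀ (sq_nonneg _) hcs _
    _ = (τ (l₁.prod * star l₁.prod)).re ^ 2 ^ k * (τ (l₂.prod * star l₂.prod)).re ^ 2 ^ k :=
        mul_pow ..
    _ ≤ (l₁.map fun c => (τ ((star c * c) ^ 2 ^ k)).re).prod *
          (l₂.map fun c => (τ ((star c * c) ^ 2 ^ k)).re).prod :=
        mul_le_mul h₁ h₂ (pow_nonneg (by simpa using hτ.re_map_pow_mul_star_nonneg _ 1) _)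
          (hτ.prod_map_re_map_pow_star_mul_self_nonneg l₁ _)
    _ = _ := by rw [← List.prod_append, ← List.map_append, List.take_append_drop]

end

theorem phi_eq_two_pow (r : ℕ) : phi r = 2 ^ ((r + 1) / 2 - 1) := by
  unfold phi
  split_ifs with h
  · obtain ⟨j, rfl⟩ := h
    congr 1
    omega
  · rfl

/-- For a positive trace `τ` on a unital complex `*`-algebra,
`r, n ∈ ℕ` and `a₁,…,aₙ ∈ A`,
`|τ((a₁+⋯+aₙ)^r)| ≤ (Σᵢ τ((aᵢ*aᵢ)^{φ(r)})^{1/(2φ(r))})^r`.  (Each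
`τ((aᵢ*aᵢ)^{φ(r)})` is a nonnegative real, recorded via its real part.) -/
theorem trace_power_sum_estimate
    {A : Type*} [Ring A] [Algebra ℂ A] [StarRing A] [StarModule ℂ A]
    (τ : A →ₗ[ℂ] ℂ) (hτ : IsTrace τ) (r n : ℕ) (a : Fin n → A) :
    ‖τ ((∑ i, a i) ^ r)‖ ≤
      (∑ i, ((τ ((star (a i) * a i) ^ phi r)).re) ^ (1 / (2 * (phi r : ℝ)))) ^ r := by
  set k := (r + 1) / 2 - 1
  have hk : (2 * (phi r : ℝ)) = ((2 * 2 ^ k : ℕ) : ℝ) := by rw [phi_eq_two_pow]; push_cast; rfl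
  rw [hk, one_div, phi_eq_two_pow, sum_pow_eq_sum_list_prod, map_sum, Fintype.sum_pow]
  refine (norm_sum_le _ _).trans (Finset.sum_le_sum fun f _ => ?_)
  have hword := hτ.norm_map_list_prod_pow_le (List.ofFn fun j => a (f j)) k (by simp [k]; omega)
  rw [List.map_ofFn, List.prod_ofFn] at hword
  rw [Real.finsetProd_rpow _ _ fun j _ => hτ.re_map_pow_star_mul_self_nonneg _ _]
  exact (Real.le_rpow_inv_iff_of_pos (norm_nonneg _)
    (Finset.prod_nonneg fun j _ => hτ.re_map_pow_star_mul_self_nonneg _ _)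
    (by positivity)).2 (by exact_mod_cast hword)
end
end

section
/- Let k ≥ 1 and P₁,…,P_m ∈ ℂ⟨X⟩. If Σ_{i=1}^m Pᵢ*Pᵢ ∈ J_k + C_cyc, then Pᵢ ∈ J_k for all 1 ≤ i ≤ m. -/
noncomputable section

/-- The free `*`-algebra `ℂ⟨X⟩` on a set `X` of self-adjoint variables. -/
abbrev FA (X : Type) : Type := FreeAlgebra ℂ X

/-- Coefficients of a non-commutative polynomial, indexed by words. -/
def coefficient {X : Type} (P : FA X) : FreeMonoid X →₀ ℂ :=
  (FreeAlgebra.equivMonoidAlgebraFreeMonoid P).coeff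

/-- The involution on `ℂ⟨X⟩` fixing the variables, reversing words and
conjugating coefficients. -/
def cstar {X : Type} (P : FA X) : FA X :=
  star <| (FreeAlgebra.equivMonoidAlgebraFreeMonoid (R := ℂ) (X := X)).symm <| MonoidAlgebra.ofCoeff <|
    Finsupp.mapRange (starRingEnd ℂ) (map_zero _) (coefficient P)

/-- The ideal `J_k` of polynomials vanishing at every tuple of self-adjoint
complex `k×k` matrices. -/
def Jset (X : Type) (k : ℕ) : Set (FA X) :=
  {P | ∀ a : X → Matrix (Fin k) (Fin k) ℂ, (∀ i, IsSelfAdjoint (a i)) →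
    FreeAlgebra.lift ℂ a P = 0}

/-- The homogeneous part of degree `d` of a non-commutative polynomial. -/
def homPart {X : Type} (d : ℕ) (P : FA X) : FA X :=
  (FreeAlgebra.equivMonoidAlgebraFreeMonoid (R := ℂ) (X := X)).symm
    (MonoidAlgebra.ofCoeff ((coefficient P).filter fun w : FreeMonoid X => FreeMonoid.length w = d))

/-- The span `C_cyc` of all commutators. -/
def Ccyc (X : Type) : Submodule ℂ (FA X) :=
  Submodule.span ℂ {x | ∃ P Q : FA X, x = P * Q - Q * P}

/-!
Evaluating at self-adjoint matrices `a` turns the involution of `ℂ⟨X⟩` into the conjugate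
transpose, so `Σᵢ Pᵢ* Pᵢ` evaluates to `Σᵢ Aᵢᴴ Aᵢ` with `Aᵢ = Pᵢ(a)`. Elements of `J_k`
evaluate to `0` and commutators to trace-zero matrices, so `Σᵢ tr (Aᵢᴴ Aᵢ) = 0`; this is a
sum of the squared Frobenius norms of the `Aᵢ`, hence every `Aᵢ` vanishes.
-/

open scoped Matrix ComplexOrder

theorem star_list_prod {A : Type*} [Monoid A] [StarMul A] (l : List A) :
    star l.prod = (l.map star).reverse.prod := by
  induction l with
  | nil => simp
  | cons x l ih => simp [star_mul, ih]

namespace FreeAlgebra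

variable {R X : Type*} [CommSemiring R]

theorem star_smul (r : R) (x : FreeAlgebra R X) : star (r • x) = r • star x := by
  rw [Algebra.smul_def, star_mul, star_algebraMap, Algebra.smul_def, Algebra.commutes]

theorem star_list_prod_map_ι (l : List X) :
    star (l.map (ι R)).prod = (l.map (ι R)).reverse.prod := by
  simp [star_list_prod, Function.comp_def]

theorem equivMonoidAlgebraFreeMonoid_symm_ofCoeff (f : FreeMonoid X →₀ R) :
    equivMonoidAlgebraFreeMonoid.symm (MonoidAlgebra.ofCoeff f)
      = f.sum fun w r => r • (w.toList.map (ι R)).prod := by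
  change MonoidAlgebra.lift R (FreeAlgebra R X) (FreeMonoid X) (FreeMonoid.lift (ι R)) _ = _
  simp only [MonoidAlgebra.lift_apply, FreeMonoid.lift_apply]

end FreeAlgebra

section Evaluation

variable {X : Type} {A : Type*} [Semiring A] [Algebra ℂ A]

theorem lift_eq_sum_coefficient (a : X → A) (P : FA X) :
    FreeAlgebra.lift ℂ a P = (coefficient P).sum fun w c => c • (w.toList.map a).prod := by
  conv_lhs => rw [← FreeAlgebra.equivMonoidAlgebraFreeMonoid.symm_apply_apply P]
  rw [FreeAlgebra.equivMonoidAlgebraFreeMonoid_symm_ofCoeff, Finsupp.sum, map_sum, Finsupp.sum]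
  simp [coefficient, map_list_prod, Function.comp_def]

theorem lift_cstar [StarRing A] [StarModule ℂ A] (a : X → A) (ha : ∀ x, IsSelfAdjoint (a x))
    (P : FA X) : FreeAlgebra.lift ℂ a (cstar P) = star (FreeAlgebra.lift ℂ a P) := by
  rw [cstar, FreeAlgebra.equivMonoidAlgebraFreeMonoid_symm_ofCoeff,
    Finsupp.sum_mapRange_index (by simp), lift_eq_sum_coefficient a P, Finsupp.sum, Finsupp.sum,
    star_sum, star_sum, map_sum]
  refine Finset.sum_congr rfl fun w _ => ?_
  rw [FreeAlgebra.star_smul, FreeAlgebra.star_list_prod_map_ι, map_smul, map_list_prod,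
    star_smul, star_list_prod]
  simp [Function.comp_def, fun x => (ha x).star_eq]

end Evaluation

theorem trace_lift_eq_zero_of_mem_Ccyc {X : Type} {ι : Type*} [Fintype ι] [DecidableEq ι]
    (a : X → Matrix ι ι ℂ) {c : FA X} (hc : c ∈ Ccyc X) :
    (FreeAlgebra.lift ℂ a c).trace = 0 := by
  induction hc using Submodule.span_induction with
  | mem x hx =>
    obtain ⟨p, q, rfl⟩ := hx
    rw [map_sub, map_mul, map_mul, Matrix.trace_sub, Matrix.trace_mul_comm, sub_self]
  | zero => simp
  | add x y _ _ hx hy => rw [map_add, Matrix.trace_add, hx, hy, add_zero]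
  | smul r x _ hx => rw [map_smul, Matrix.trace_smul, hx, smul_zero]

theorem Matrix.eq_zero_of_sum_trace_conjTranspose_mul_self_eq_zero {ι m n R : Type*}
    [Fintype m] [Fintype n] [CommRing R] [PartialOrder R] [StarRing R] [StarOrderedRing R]
    [NoZeroDivisors R] {s : Finset ι} {M : ι → Matrix m n R}
    (h : ∑ i ∈ s, ((M i)ᴴ * M i).trace = 0) : ∀ i ∈ s, M i = 0 := fun i hi =>
  trace_conjTranspose_mul_self_eq_zero_iff.mp <|
    (Finset.sum_eq_zero_iff_of_nonneg fun i _ =>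
      (posSemidef_conjTranspose_mul_self (M i)).trace_nonneg).mp h i hi

theorem sum_of_squares_in_Jset_add_Ccyc_general (n : ℕ) (k : ℕ)
    (m : ℕ) (P : Fin m → FA (Fin n))
    (h : ∃ j ∈ Jset (Fin n) k, ∃ c ∈ Ccyc (Fin n),
      (∑ i, cstar (P i) * P i) = j + c) :
    ∀ i, P i ∈ Jset (Fin n) k := by
  obtain ⟨j, hj, c, hc, hsum⟩ := h
  intro i a ha
  have htrace : ∑ i, ((FreeAlgebra.lift ℂ a (P i))ᴴ * FreeAlgebra.lift ℂ a (P i)).trace = 0 := by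
    simp_rw [← Matrix.star_eq_conjTranspose, ← lift_cstar a ha, ← map_mul, ← Matrix.trace_sum,
      ← map_sum, hsum, map_add, Matrix.trace_add, hj a ha, Matrix.trace_zero,
      trace_lift_eq_zero_of_mem_Ccyc a hc, add_zero]
  exact Matrix.eq_zero_of_sum_trace_conjTranspose_mul_self_eq_zero htrace i (Finset.mem_univ i)

/-- If a sum of hermitian squares `Σᵢ Pᵢ*Pᵢ` lies in
`J_k + C_cyc` (`k ≥ 1`), then every `Pᵢ` lies in `J_k`. -/
theorem sum_of_squares_in_Jset_add_Ccyc (n : ℕ) (k : ℕ) (hk : 1 ≤ k)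
    (m : ℕ) (P : Fin m → FA (Fin n))
    (h : ∃ j ∈ Jset (Fin n) k, ∃ c ∈ Ccyc (Fin n),
      (∑ i, cstar (P i) * P i) = j + c) :
    ∀ i, P i ∈ Jset (Fin n) k :=
  sum_of_squares_in_Jset_add_Ccyc_general n k m P h
end
end

section
/- Let P ∈ ℂ⟨X₁,…,Xₙ⟩ be a sum of hermitian squares of degree at most m, i.e. P ∈ ℂ⟨X⟩_{≤m} ∩ Q(ℂ⟨X⟩). Then there exist polynomials P₁,…,P_{(n+1)^m} ∈ ℂ⟨X⟩, each of degree at most m/2, such that P = Σ_{i=1}^{(n+1)^m} Pᵢ*Pᵢ. -/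
noncomputable section

/-- Polynomials of degree at most `m`. -/
def degLE (X : Type) (m : ℕ) : Set (FA X) :=
  {P | ∀ w ∈ (coefficient P).support, (FreeMonoid.length w) ≤ m}

/-- The convex cone `Q(ℂ⟨X⟩)` of sums of hermitian squares. -/
def Qcone (X : Type) : Set (FA X) :=
  {x | ∃ (m : ℕ) (P : Fin m → FA X), x = ∑ i, cstar (P i) * P i}

/-! The leading terms of a sum of hermitian squares cannot cancel: if every `Qᵢ` has degree at
most `D` and `v` is a word of length `D`, the coefficient of the word `v* v` in `∑ Qᵢ* Qᵢ` is
`∑ |cᵢ|²`, where `cᵢ` is the coefficient of `v` in `Qᵢ`. Hence if `∑ Qᵢ* Qᵢ` has degree at most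
`m`, every `Qᵢ` has degree at most `m / 2`. Writing `Qᵢ = ∑_w A_{iw} w` over the words `w` of
length at most `L = m / 2`, the sum `∑ Qᵢ* Qᵢ` only depends on the Gram matrix `A* A`, which is
also `B* B` for a square `B`, and the rows of `B` give one square per word. Listing these words
as the padded strings `Fin L → Option (Fin n)` gives `(n + 1)^L ≤ (n + 1)^m` squares. -/

open FreeAlgebra Submodule
open scoped Matrix

theorem FreeMonoid.length_star {α : Type*} (w : FreeMonoid α) : (star w).length = w.length :=
  List.length_reverse

theorem FreeMonoid.eq_and_eq_of_mul_eq_mul {α : Type*} {a b u v : FreeMonoid α}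
    (h : a * b = u * v) (ha : a.length ≤ u.length) (hb : b.length ≤ v.length) : a = u ∧ b = v := by
  have hlen : a.length = u.length := by
    have := congrArg FreeMonoid.length h
    simp only [FreeMonoid.length_mul] at this
    omega
  exact (List.append_inj h hlen).imp (fun h => FreeMonoid.toList.injective h)
    (fun h => FreeMonoid.toList.injective h)

theorem List.reduceOption_ofFn_getElem? {α : Type*} (l : List α) {L : ℕ} (hl : l.length ≤ L) :
    (List.ofFn fun j : Fin L => l[(j : ℕ)]?).reduceOption = l := by
  induction l generalizing L with
  | nil => simp [List.reduceOption]
  | cons a t ih =>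
    cases L with
    | zero => simp at hl
    | succ L => simp [List.ofFn_succ, ih (Nat.le_of_succ_le_succ hl)]

def FreeMonoid.ofFnOption {α : Type*} {L : ℕ} (f : Fin L → Option α) : FreeMonoid α :=
  FreeMonoid.ofList (List.ofFn f).reduceOption

theorem FreeMonoid.range_ofFnOption {α : Type*} (L : ℕ) :
    Set.range (FreeMonoid.ofFnOption (α := α) (L := L)) = {w | w.length ≤ L} := by
  ext w
  constructor
  · rintro ⟨f, rfl⟩
    exact (List.reduceOption_length_le _).trans List.length_ofFn.le
  · exact fun hw => ⟨fun j => w.toList[(j : ℕ)]?,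
      congrArg FreeMonoid.ofList (List.reduceOption_ofFn_getElem? w.toList hw)⟩

theorem FreeAlgebra.star_smul_eq_smul_star {R X : Type*} [CommSemiring R] (r : R)
    (P : FreeAlgebra R X) : star (r • P) = r • star P := by
  rw [Algebra.smul_def, star_mul, star_algebraMap, ← Algebra.commutes, ← Algebra.smul_def]

theorem FreeAlgebra.star_basisFreeMonoid {R X : Type*} [CommSemiring R] (w : FreeMonoid X) :
    star (basisFreeMonoid R X w) = basisFreeMonoid R X (star w) := by
  have lift_eq (w : FreeMonoid X) : basisFreeMonoid R X w = FreeMonoid.lift (ι R) w := by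
    simp [basisFreeMonoid, equivMonoidAlgebraFreeMonoid]
  induction w using FreeMonoid.recOn with
  | one => simp [lift_eq]
  | of_mul x w ih =>
    simp only [lift_eq, star_mul, map_mul, FreeMonoid.lift_eval_of, FreeMonoid.star_of,
      star_ι] at ih ⊢
    rw [ih]

variable {X : Type}

theorem basisFreeMonoid_repr_eq_coefficient (P : FA X) :
    (basisFreeMonoid ℂ X).repr P = coefficient P :=
  rfl

theorem coefficient_injective : Function.Injective (coefficient (X := X)) :=
  (basisFreeMonoid ℂ X).repr.injective

theorem degLE_eq_span (m : ℕ) :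
    degLE X m = span ℂ (basisFreeMonoid ℂ X '' {w | w.length ≤ m}) := by
  ext P
  rw [SetLike.mem_coe, Module.Basis.mem_span_image, basisFreeMonoid_repr_eq_coefficient]
  rfl

theorem exists_forall_mem_degLE {ι : Type*} [Fintype ι] (Q : ι → FA X) :
    ∃ D, ∀ i, Q i ∈ degLE X D := by
  refine ⟨Finset.univ.sup fun i => (coefficient (Q i)).support.sup FreeMonoid.length,
    fun i w hw => ?_⟩
  exact (Finset.le_sup hw).trans
    (Finset.le_sup (f := fun i => (coefficient (Q i)).support.sup FreeMonoid.length)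
      (Finset.mem_univ i))

theorem coefficient_star (P : FA X) (v : FreeMonoid X) :
    coefficient (star P) v = coefficient P (star v) := by
  let starₗ : FA X →ₗ[ℂ] FA X :=
    { toFun := star, map_add' := star_add, map_smul' := star_smul_eq_smul_star }
  let lhs : FA X →ₗ[ℂ] ℂ :=
    (Finsupp.lapply v).comp ((basisFreeMonoid ℂ X).repr.toLinearMap.comp starₗ)
  let rhs : FA X →ₗ[ℂ] ℂ :=
    (Finsupp.lapply (star v)).comp (basisFreeMonoid ℂ X).repr.toLinearMap
  have : lhs = rhs := (basisFreeMonoid ℂ X).ext fun w => by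
    change (basisFreeMonoid ℂ X).repr (star (basisFreeMonoid ℂ X w)) v =
      (basisFreeMonoid ℂ X).repr (basisFreeMonoid ℂ X w) (star v)
    rw [star_basisFreeMonoid, Module.Basis.repr_self, Module.Basis.repr_self,
      ← Finsupp.single_apply_left star_injective w (star v), star_star]
  exact LinearMap.congr_fun this P

theorem coefficient_cstar (P : FA X) (v : FreeMonoid X) :
    coefficient (cstar P) v = starRingEnd ℂ (coefficient P (star v)) := by
  rw [cstar, coefficient_star, coefficient, AlgEquiv.apply_symm_apply]
  rfl

theorem cstar_sum_smul {ι : Type*} [Fintype ι] (c : ι → ℂ) (E : ι → FA X) :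
    cstar (∑ f, c f • E f) = ∑ f, starRingEnd ℂ (c f) • cstar (E f) := by
  refine coefficient_injective (Finsupp.ext fun v => ?_)
  rw [coefficient_cstar]
  simp only [← basisFreeMonoid_repr_eq_coefficient, map_sum, map_smul, Finset.sum_apply',
    Finsupp.smul_apply, smul_eq_mul, map_mul]
  simp only [basisFreeMonoid_repr_eq_coefficient, coefficient_cstar]

theorem cstar_mem_degLE {P : FA X} {d : ℕ} (hP : P ∈ degLE X d) : cstar P ∈ degLE X d := by
  intro w hw
  rw [Finsupp.mem_support_iff, coefficient_cstar, map_ne_zero, ← Finsupp.mem_support_iff] at hw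
  simpa only [FreeMonoid.length_star] using hP _ hw

theorem coefficient_mul_mul_of_mem_degLE {P Q : FA X} {u v : FreeMonoid X}
    (hP : P ∈ degLE X u.length) (hQ : Q ∈ degLE X v.length) :
    coefficient (P * Q) (u * v) = coefficient P u * coefficient Q v := by
  classical
  change (equivMonoidAlgebraFreeMonoid (P * Q)).coeff (u * v) = _
  rw [map_mul equivMonoidAlgebraFreeMonoid P Q, MonoidAlgebra.coeff_mul, Finsupp.sum,
    Finset.sum_eq_single u]
  · rw [Finsupp.sum, Finset.sum_eq_single v]
    · exact if_pos rfl
    · exact fun b _ hbv => if_neg fun h => hbv (mul_left_cancel h)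
    · intro hv
      rw [Finsupp.notMem_support_iff.mp hv, mul_zero, ite_self]
  · refine fun a ha hau => Finset.sum_eq_zero fun b hb => if_neg fun h => hau ?_
    exact (FreeMonoid.eq_and_eq_of_mul_eq_mul h (hP a ha) (hQ b hb)).1
  · intro hu
    exact Finset.sum_eq_zero fun b _ => by simp [Finsupp.notMem_support_iff.mp hu]

theorem coefficient_cstar_mul_self_of_mem_degLE {Q : FA X} {v : FreeMonoid X}
    (hQ : Q ∈ degLE X v.length) :
    coefficient (cstar Q * Q) (star v * v) = Complex.normSq (coefficient Q v) := by
  have hQ' : cstar Q ∈ degLE X (star v).length := by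
    rw [FreeMonoid.length_star]
    exact cstar_mem_degLE hQ
  rw [coefficient_mul_mul_of_mem_degLE hQ' hQ, coefficient_cstar, star_star,
    Complex.normSq_eq_conj_mul_self]

theorem mem_degLE_of_sum_cstar_mul_self_of_mem_degLE_succ {ι : Type*} [Fintype ι]
    {m D : ℕ} {Q : ι → FA X} (hsum : ∑ i, cstar (Q i) * Q i ∈ degLE X m)
    (hm : m < 2 * (D + 1)) (hQ : ∀ i, Q i ∈ degLE X (D + 1)) (i : ι) : Q i ∈ degLE X D := by
  intro v hv
  by_contra hlen
  have hvD : v.length = D + 1 := by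
    have := hQ i v hv
    omega
  have hzero : ∑ j, Complex.normSq (coefficient (Q j) v) = 0 := by
    have htop : coefficient (∑ j, cstar (Q j) * Q j) (star v * v) = 0 := by
      by_contra hne
      have := hsum _ (Finsupp.mem_support_iff.mpr hne)
      rw [FreeMonoid.length_mul, FreeMonoid.length_star] at this
      omega
    rw [← basisFreeMonoid_repr_eq_coefficient, map_sum, Finset.sum_apply'] at htop
    simp only [basisFreeMonoid_repr_eq_coefficient,
      coefficient_cstar_mul_self_of_mem_degLE (hvD ▸ hQ _)] at htop
    exact_mod_cast htop
  have := (Finset.sum_eq_zero_iff_of_nonneg fun j _ => Complex.normSq_nonneg _).mp hzero i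
    (Finset.mem_univ i)
  exact Finsupp.mem_support_iff.mp hv (Complex.normSq_eq_zero.mp this)

theorem mem_degLE_half_of_sum_cstar_mul_self {ι : Type*} [Fintype ι] {m : ℕ}
    {Q : ι → FA X} (hsum : ∑ i, cstar (Q i) * Q i ∈ degLE X m) (i : ι) :
    Q i ∈ degLE X (m / 2) := by
  obtain ⟨D, hD⟩ := exists_forall_mem_degLE Q
  replace hD : ∀ i, Q i ∈ degLE X (m / 2 + D) := fun i w hw => le_add_left (hD i w hw)
  induction D with
  | zero => exact hD i
  | succ D ih =>
    exact ih (mem_degLE_of_sum_cstar_mul_self_of_mem_degLE_succ hsum (by omega) hD)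

theorem sum_cstar_mul_self_sum_smul {κ ι : Type*} [Fintype κ] [Fintype ι] (A : Matrix κ ι ℂ)
    (E : ι → FA X) :
    ∑ i, cstar (∑ f, A i f • E f) * ∑ f, A i f • E f
      = ∑ f, ∑ g, (Aᴴ * A) f g • (cstar (E f) * E g) := by
  simp_rw [cstar_sum_smul, Finset.sum_mul_sum, smul_mul_smul_comm, Matrix.mul_apply,
    Matrix.conjTranspose_apply, Finset.sum_smul]
  rw [Finset.sum_comm]
  exact Finset.sum_congr rfl fun f _ => Finset.sum_comm

open scoped ComplexOrder MatrixOrder in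
theorem exists_sum_cstar_mul_self_eq_of_mem_span {κ ι : Type*} [Fintype κ] [Fintype ι]
    {E : ι → FA X} {Q : κ → FA X} (hQ : ∀ i, Q i ∈ span ℂ (Set.range E)) :
    ∃ R : ι → FA X, (∀ h, R h ∈ span ℂ (Set.range E)) ∧
      ∑ i, cstar (Q i) * Q i = ∑ h, cstar (R h) * R h := by
  choose A hA using fun i => (mem_span_range_iff_exists_fun ℂ).mp (hQ i)
  obtain ⟨B, hB⟩ : ∃ B : Matrix ι ι ℂ, (Matrix.of A)ᴴ * Matrix.of A = Bᴴ * B := by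
    classical
    exact CStarAlgebra.nonneg_iff_eq_star_mul_self.mp
      (Matrix.posSemidef_conjTranspose_mul_self _).nonneg
  refine ⟨fun h => ∑ f, B h f • E f,
    fun h => sum_mem fun f _ => smul_mem _ _ (subset_span (Set.mem_range_self f)), ?_⟩
  simp_rw [← hA]
  exact (sum_cstar_mul_self_sum_smul (Matrix.of A) E).trans
    (hB ▸ (sum_cstar_mul_self_sum_smul B E).symm)

theorem exists_sum_cstar_mul_self_eq_of_mem_degLE [Fintype X] {κ : Type*} [Fintype κ] {L : ℕ}
    {Q : κ → FA X} (hQ : ∀ i, Q i ∈ degLE X L) :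
    ∃ R : (Fin L → Option X) → FA X, (∀ h, R h ∈ degLE X L) ∧
      ∑ i, cstar (Q i) * Q i = ∑ h, cstar (R h) * R h := by
  have hspan : degLE X L =
      span ℂ (Set.range (basisFreeMonoid ℂ X ∘ FreeMonoid.ofFnOption (L := L))) := by
    rw [degLE_eq_span, Set.range_comp, FreeMonoid.range_ofFnOption]
  simp only [hspan, SetLike.mem_coe] at hQ ⊢
  exact exists_sum_cstar_mul_self_eq_of_mem_span hQ

theorem exists_fin_sum_cstar_mul_self_eq {ι : Type*} [Fintype ι] {N d : ℕ}
    (hN : Fintype.card ι ≤ N) {R : ι → FA X} (hR : ∀ h, R h ∈ degLE X d) :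
    ∃ Ps : Fin N → FA X, (∀ j, Ps j ∈ degLE X d) ∧
      ∑ h, cstar (R h) * R h = ∑ j, cstar (Ps j) * Ps j := by
  classical
  obtain ⟨e⟩ := Function.Embedding.nonempty_of_card_le (hN.trans (Fintype.card_fin N).ge)
  refine ⟨Function.extend e R 0, fun j => ?_, ?_⟩
  · by_cases hj : ∃ h, e h = j
    · obtain ⟨h, rfl⟩ := hj
      rw [e.injective.extend_apply]
      exact hR h
    · rw [Function.extend_apply' _ _ _ hj, degLE_eq_span]
      exact zero_mem _
  · refine Fintype.sum_of_injective e e.injective _ _ (fun j hj => ?_) fun h => ?_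
    · rw [Function.extend_apply' _ _ _ hj, Pi.zero_apply, mul_zero]
    · rw [e.injective.extend_apply]

/-- Caratheodory/Schmüdgen.  A sum of hermitian squares
`P ∈ ℂ⟨X₁,…,Xₙ⟩` of degree at most `m` can be written as a sum of `(n+1)^m`
hermitian squares `Pᵢ*Pᵢ` with each `Pᵢ` of degree at most `m/2`. -/
theorem caratheodory_sum_of_squares (n m : ℕ) (P : FA (Fin n))
    (hdeg : P ∈ degLE (Fin n) m) (hQ : P ∈ Qcone (Fin n)) :
    ∃ Ps : Fin ((n + 1) ^ m) → FA (Fin n),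
      (∀ i, Ps i ∈ degLE (Fin n) (m / 2)) ∧
      P = ∑ i, cstar (Ps i) * Ps i := by
  obtain ⟨k, Q, rfl⟩ := hQ
  obtain ⟨R, hR, hsum⟩ :=
    exists_sum_cstar_mul_self_eq_of_mem_degLE (mem_degLE_half_of_sum_cstar_mul_self hdeg)
  rw [hsum]
  refine exists_fin_sum_cstar_mul_self_eq ?_ hR
  simpa using Nat.pow_le_pow_right n.succ_pos (Nat.div_le_self m 2)
end
end
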